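/- Let T be a tournament on a finite vertex set, let k be a nonnegative integer, and let A' be a DESC-set of T with |A'| ≤ k. If xy is an arc of T (from x to y) with d⁺_T(y) − d⁺_T(x) > k, then xy ∈ A'. -/

import Mathlib

/-!
Digraphs on a finite vertex type `V` are modelled by their arc sets
`D : Finset (V × V)`, where `(x, y) ∈ D` means there is an arc from `x` to `y`.
-/

namespace DescPaper

variable {V : Type*} [Fintype V] [DecidableEq V]

/-- The out-degree of `x` in the digraph `D`. -/
def outDeg (D : Finset (V × V)) (x : V) : ℕ :=
  (D.filter (fun a => a.1 = x)).card

/-- The in-degree of `x` in the digraph `D`. -/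
def inDeg (D : Finset (V × V)) (x : V) : ℕ :=
  (D.filter (fun a => a.2 = x)).card

/-- The number of arcs of `D` from `x` to a vertex of `Y`. -/
def outDegInto (D : Finset (V × V)) (x : V) (Y : Finset V) : ℕ :=
  (D.filter (fun a => a.1 = x ∧ a.2 ∈ Y)).card

/-- The subgraph of `D` induced by the vertex set `X`. -/
def induce (D : Finset (V × V)) (X : Finset V) : Finset (V × V) :=
  D.filter (fun a => a.1 ∈ X ∧ a.2 ∈ X)

/-- Reachability by a directed path in the digraph `D`. -/
def Reach (D : Finset (V × V)) : V → V → Prop :=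
  Relation.ReflTransGen (fun u v => (u, v) ∈ D)

/-- The subgraph of `D` induced by `X` is strongly connected. -/
def StronglyConnectedOn (D : Finset (V × V)) (X : Finset V) : Prop :=
  ∀ x ∈ X, ∀ y ∈ X, Reach (induce D X) x y

/-- `X` is the vertex set of a strong component of `D`:
a maximal (nonempty) vertex set inducing a strongly connected subgraph. -/
def IsStrongComponent (D : Finset (V × V)) (X : Finset V) : Prop :=
  X.Nonempty ∧ StronglyConnectedOn D X ∧
    ∀ Y : Finset V, X ⊆ Y → StronglyConnectedOn D Y → Y = X

/-- The digraph `D` is balanced: every vertex has equal in- and out-degree. -/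
def IsBalanced (D : Finset (V × V)) : Prop :=
  ∀ x : V, outDeg D x = inDeg D x

/-- The subgraph of `D` induced by `X` is Eulerian:
strongly connected and balanced. -/
def EulerianOn (D : Finset (V × V)) (X : Finset V) : Prop :=
  StronglyConnectedOn D X ∧ IsBalanced (induce D X)

/-- `A'` is a DESC-set of `D`: a set of arcs of `D` such that every strong
component of `D - A'` is Eulerian. -/
def IsDESC (D A' : Finset (V × V)) : Prop :=
  A' ⊆ D ∧ ∀ X : Finset V, IsStrongComponent (D \ A') X → EulerianOn (D \ A') X

/-- `desc D` is the minimum size of a DESC-set of `D`. -/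
noncomputable def desc (D : Finset (V × V)) : ℕ :=
  sInf {n | ∃ A' : Finset (V × V), IsDESC D A' ∧ A'.card = n}

/-- `T` is a tournament: no loops, and for every pair of distinct vertices
exactly one of the two possible arcs is present. -/
def IsTournament (T : Finset (V × V)) : Prop :=
  (∀ x : V, (x, x) ∉ T) ∧ ∀ x y : V, x ≠ y → ((x, y) ∈ T ↔ (y, x) ∉ T)

/-- `dstar A' X Y` is the number of arcs of `A'` with one endpoint in `X`
and the other endpoint in `Y` (in either direction). -/
def dstar (A' : Finset (V × V)) (X Y : Finset V) : ℕ :=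
  (A'.filter (fun a => (a.1 ∈ X ∧ a.2 ∈ Y) ∨ (a.1 ∈ Y ∧ a.2 ∈ X))).card

end DescPaper

open DescPaper

/-!
Suppose `xy ∉ A'` and let `X` be the strong component of `y` in `T - A'`. Whenever `y → z → x`
in `T` with neither arc in `A'`, the triangle `x → y → z → x` survives in `T - A'`, so
`x, z ∈ X`. Hence an out-neighbour `z` of `y` that is not an out-neighbour of `x` (so `z → x`)
pays for itself with an arc of `A'` at `y` or at `x`, as long as `z ∉ X` or `x ∉ X`. If `x ∉ X`
this already bounds `d⁺(y) - d⁺(x)`. If `x ∈ X`, the component `X` is Eulerian in `T - A'`, and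
balance together with `d⁺_X(v) + d⁻_X(v) = |X| - 1` in the tournament gives
`2 d⁺_X(v) = |X| - 1 + d⁺_{A',X}(v) - d⁻_{A',X}(v)`, which bounds the difference of the
out-degrees inside `X` by the arcs of `A'` at `y` and `x` inside `X`. In both cases
`d⁺(y) - d⁺(x) ≤ d⁺_{A'}(y) + d⁻_{A'}(x) ≤ |A'| ≤ k`, the middle step because
`yx ∉ A'`.
-/

namespace DescPaper

open Finset

variable {V : Type*}

lemma Reach.mono {D E : Finset (V × V)} (h : D ⊆ E) {u v : V} (huv : Reach D u v) :
    Reach E u v :=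
  Relation.ReflTransGen.mono (fun _ _ hab => h hab) _ _ huv

namespace IsTournament

variable {T : Finset (V × V)} (hT : IsTournament T) {a b : V}
include hT

lemma notMem_swap (h : (a, b) ∈ T) : (b, a) ∉ T := by
  obtain rfl | hab := eq_or_ne a b
  · exact hT.1 a
  · exact (hT.2 a b hab).1 h

lemma mem_swap_of_notMem (hab : a ≠ b) (h : (a, b) ∉ T) : (b, a) ∈ T := by
  by_contra h'
  exact h ((hT.2 a b hab).2 h')

end IsTournament

variable [DecidableEq V]

section StrongComponents

variable {D : Finset (V × V)}

lemma induce_mono (D : Finset (V × V)) {X Y : Finset V} (h : X ⊆ Y) :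
    induce D X ⊆ induce D Y := fun _ ha =>
  mem_filter.2 ⟨(mem_filter.1 ha).1, h (mem_filter.1 ha).2.1, h (mem_filter.1 ha).2.2⟩

lemma stronglyConnectedOn_of_forall_reach {X : Finset V} {v : V}
    (h : ∀ u ∈ X, Reach (induce D X) u v ∧ Reach (induce D X) v u) :
    StronglyConnectedOn D X :=
  fun a ha b hb => (h a ha).1.trans (h b hb).2

lemma stronglyConnectedOn_singleton (D : Finset (V × V)) (v : V) :
    StronglyConnectedOn D {v} :=
  stronglyConnectedOn_of_forall_reach fun u hu => by
    rw [mem_singleton.1 hu]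
    exact ⟨.refl, .refl⟩

lemma stronglyConnectedOn_triangle {x y z : V} (hxy : (x, y) ∈ D) (hyz : (y, z) ∈ D)
    (hzx : (z, x) ∈ D) : StronglyConnectedOn D {x, y, z} := by
  have hx : x ∈ ({x, y, z} : Finset V) := by simp
  have hy : y ∈ ({x, y, z} : Finset V) := by simp
  have hz : z ∈ ({x, y, z} : Finset V) := by simp
  have arc {a b : V} (hab : (a, b) ∈ D) (ha : a ∈ ({x, y, z} : Finset V))
      (hb : b ∈ ({x, y, z} : Finset V)) : Reach (induce D {x, y, z}) a b :=
    .single (mem_filter.2 ⟨hab, ha, hb⟩)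
  refine stronglyConnectedOn_of_forall_reach (v := x) fun u hu => ?_
  simp only [mem_insert, mem_singleton] at hu
  rcases hu with rfl | rfl | rfl
  · exact ⟨.refl, .refl⟩
  · exact ⟨(arc hyz hy hz).trans (arc hzx hz hx), arc hxy hx hy⟩
  · exact ⟨arc hzx hz hx, (arc hxy hx hy).trans (arc hyz hy hz)⟩

lemma StronglyConnectedOn.union {X Y : Finset V} {v : V} (hX : StronglyConnectedOn D X)
    (hY : StronglyConnectedOn D Y) (hvX : v ∈ X) (hvY : v ∈ Y) :
    StronglyConnectedOn D (X ∪ Y) := by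
  refine stronglyConnectedOn_of_forall_reach (v := v) fun u hu => ?_
  rcases mem_union.1 hu with hu | hu
  · have lift {a b : V} : Reach (induce D X) a b → Reach (induce D (X ∪ Y)) a b :=
      Reach.mono (induce_mono D subset_union_left)
    exact ⟨lift (hX u hu v hvX), lift (hX v hvX u hu)⟩
  · have lift {a b : V} : Reach (induce D Y) a b → Reach (induce D (X ∪ Y)) a b :=
      Reach.mono (induce_mono D subset_union_right)
    exact ⟨lift (hY u hu v hvY), lift (hY v hvY u hu)⟩

lemma IsStrongComponent.subset_of_stronglyConnectedOn {X Y : Finset V} {v : V}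
    (hX : IsStrongComponent D X) (hY : StronglyConnectedOn D Y) (hvX : v ∈ X) (hvY : v ∈ Y) :
    Y ⊆ X := by
  have hXY := hX.2.2 (X ∪ Y) subset_union_left (hX.2.1.union hY hvX hvY)
  exact hXY ▸ subset_union_right

lemma exists_isStrongComponent_mem [Fintype V] (D : Finset (V × V)) (v : V) :
    ∃ X, IsStrongComponent D X ∧ v ∈ X := by
  classical
  obtain ⟨X, hX, hmax⟩ :=
    (univ.filter fun Y => v ∈ Y ∧ StronglyConnectedOn D Y).exists_maximal
      ⟨{v}, by simp [stronglyConnectedOn_singleton]⟩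
  simp only [mem_filter, mem_univ, true_and] at hX hmax
  refine ⟨X, ⟨⟨v, hX.1⟩, hX.2, fun Y hXY hY => ?_⟩, hX.1⟩
  exact le_antisymm (hmax ⟨hXY hX.1, hY⟩ hXY) hXY

end StrongComponents

lemma outDeg_add_inDeg_le_card {D : Finset (V × V)} {x y : V} (h : (y, x) ∉ D) :
    outDeg D y + inDeg D x ≤ #D := by
  rw [outDeg, inDeg, ← card_union_of_disjoint]
  · exact card_le_card (union_subset (filter_subset _ _) (filter_subset _ _))
  · rw [disjoint_filter]
    rintro ⟨a, b⟩ hab rfl rfl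
    exact h hab

section Neighbourhoods

variable [Fintype V]

def outNbrs (D : Finset (V × V)) (v : V) : Finset V := univ.filter fun z => (v, z) ∈ D

def inNbrs (D : Finset (V × V)) (v : V) : Finset V := univ.filter fun z => (z, v) ∈ D

variable {D T A' : Finset (V × V)} {v x y : V}

@[simp] lemma mem_outNbrs {z : V} : z ∈ outNbrs D v ↔ (v, z) ∈ D := by simp [outNbrs]

@[simp] lemma mem_inNbrs {z : V} : z ∈ inNbrs D v ↔ (z, v) ∈ D := by simp [inNbrs]

lemma card_outNbrs (D : Finset (V × V)) (v : V) : #(outNbrs D v) = outDeg D v := by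
  rw [outDeg, ← card_image_of_injective _ (Prod.mk_right_injective v)]
  congr 1
  ext ⟨a, b⟩
  simp only [mem_image, mem_outNbrs, mem_filter, Prod.mk.injEq]
  constructor
  · rintro ⟨_, h, rfl, rfl⟩
    exact ⟨h, rfl⟩
  · rintro ⟨h, rfl⟩
    exact ⟨b, h, rfl, rfl⟩

lemma card_inNbrs (D : Finset (V × V)) (v : V) : #(inNbrs D v) = inDeg D v := by
  rw [inDeg, ← card_image_of_injective _ (Prod.mk_left_injective v)]
  congr 1
  ext ⟨a, b⟩
  simp only [mem_image, mem_inNbrs, mem_filter, Prod.mk.injEq]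
  constructor
  · rintro ⟨_, h, rfl, rfl⟩
    exact ⟨h, rfl⟩
  · rintro ⟨h, rfl⟩
    exact ⟨a, h, rfl, rfl⟩

lemma outNbrs_induce_sdiff {X : Finset V} (hv : v ∈ X) :
    outNbrs (induce (T \ A') X) v = (outNbrs T v ∩ X) \ (outNbrs A' v ∩ X) := by
  ext z
  simp only [induce, mem_outNbrs, mem_filter, mem_sdiff, hv, true_and, mem_inter, not_and]
  tauto

lemma inNbrs_induce_sdiff {X : Finset V} (hv : v ∈ X) :
    inNbrs (induce (T \ A') X) v = (inNbrs T v ∩ X) \ (inNbrs A' v ∩ X) := by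
  ext z
  simp only [induce, mem_inNbrs, mem_filter, mem_sdiff, hv, and_true, mem_inter, not_and]
  tauto

lemma outNbrs_mono {E : Finset (V × V)} (h : D ⊆ E) : outNbrs D v ⊆ outNbrs E v :=
  fun _ hz => mem_outNbrs.2 (h (mem_outNbrs.1 hz))

lemma inNbrs_mono {E : Finset (V × V)} (h : D ⊆ E) : inNbrs D v ⊆ inNbrs E v :=
  fun _ hz => mem_inNbrs.2 (h (mem_inNbrs.1 hz))

namespace IsTournament

variable (hT : IsTournament T)
include hT

lemma card_outNbrs_inter_add_card_inNbrs_inter {X : Finset V} (hv : v ∈ X) :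
    #(outNbrs T v ∩ X) + #(inNbrs T v ∩ X) + 1 = #X := by
  rw [← card_union_of_disjoint, ← card_erase_add_one hv]
  · congr 2
    ext z
    simp only [mem_union, mem_inter, mem_outNbrs, mem_inNbrs, mem_erase]
    constructor
    · rintro (⟨h, hz⟩ | ⟨h, hz⟩)
      · exact ⟨fun hzv => hT.1 v (hzv ▸ h), hz⟩
      · exact ⟨fun hzv => hT.1 v (hzv ▸ h), hz⟩
    · rintro ⟨hzv, hz⟩
      by_cases h : (v, z) ∈ T
      · exact .inl ⟨h, hz⟩
      · exact .inr ⟨hT.mem_swap_of_notMem (Ne.symm hzv) h, hz⟩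
  · rw [disjoint_left]
    intro z hz hz'
    exact hT.notMem_swap (mem_outNbrs.1 (mem_inter.1 hz).1) (mem_inNbrs.1 (mem_inter.1 hz').1)

lemma two_mul_card_outNbrs_inter_of_isBalanced (hA : A' ⊆ T) {X : Finset V}
    (hbal : IsBalanced (induce (T \ A') X)) (hv : v ∈ X) :
    2 * (#(outNbrs T v ∩ X) : ℤ) = #X - 1 + #(outNbrs A' v ∩ X) - #(inNbrs A' v ∩ X) := by
  have hsubOut := inter_subset_inter (outNbrs_mono (v := v) hA) (subset_refl X)
  have hsubIn := inter_subset_inter (inNbrs_mono (v := v) hA) (subset_refl X)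
  have hbalv := hbal v
  rw [← card_outNbrs, ← card_inNbrs, outNbrs_induce_sdiff hv, inNbrs_induce_sdiff hv,
    card_sdiff_of_subset hsubOut, card_sdiff_of_subset hsubIn] at hbalv
  have hsize := hT.card_outNbrs_inter_add_card_inNbrs_inter hv
  have := card_le_card hsubOut
  have := card_le_card hsubIn
  omega

lemma card_outNbrs_inter_le (hxy : (x, y) ∈ T) (S : Finset V)
    (hS : ∀ z ∈ S, (y, z) ∈ T → (z, x) ∈ T → (y, z) ∈ A' ∨ (z, x) ∈ A') :
    #(outNbrs T y ∩ S) ≤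
      #(outNbrs T x ∩ S) + #(outNbrs A' y ∩ S) + #(inNbrs A' x ∩ S) := by
  calc #(outNbrs T y ∩ S)
      ≤ #(outNbrs T x ∩ S ∪ outNbrs A' y ∩ S ∪ inNbrs A' x ∩ S) := by
        refine card_le_card fun z hz => ?_
        obtain ⟨hyz, hzS⟩ := mem_inter.1 hz
        rw [mem_outNbrs] at hyz
        simp only [mem_union, mem_inter, mem_outNbrs, mem_inNbrs, hzS, and_true]
        by_cases hxz : (x, z) ∈ T
        · exact .inl (.inl hxz)
        have hxz_ne : x ≠ z := by
          rintro rfl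
          exact hT.notMem_swap hxy hyz
        rcases hS z hzS hyz (hT.mem_swap_of_notMem hxz_ne hxz) with h | h
        · exact .inl (.inr h)
        · exact .inr h
    _ ≤ #(outNbrs T x ∩ S) + #(outNbrs A' y ∩ S) + #(inNbrs A' x ∩ S) :=
        (card_union_le _ _).trans (Nat.add_le_add_right (card_union_le _ _) _)

lemma outDeg_le_of_isBalanced (hA : A' ⊆ T) (hxy : (x, y) ∈ T) {X : Finset V}
    (hbal : IsBalanced (induce (T \ A') X)) (hx : x ∈ X) (hy : y ∈ X)
    (hS : ∀ z ∉ X, (y, z) ∈ T → (z, x) ∈ T → (y, z) ∈ A' ∨ (z, x) ∈ A') :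
    outDeg T y ≤ outDeg T x + outDeg A' y + inDeg A' x := by
  have hinX := hT.two_mul_card_outNbrs_inter_of_isBalanced hA hbal hx
  have hinY := hT.two_mul_card_outNbrs_inter_of_isBalanced hA hbal hy
  have hout := hT.card_outNbrs_inter_le hxy Xᶜ fun z hz => hS z (mem_compl.1 hz)
  simp only [← sdiff_eq_inter_compl] at hout
  have split (s : Finset V) := card_inter_add_card_sdiff s X
  have := split (outNbrs T x)
  have := split (outNbrs T y)
  have := split (outNbrs A' y)
  have := split (inNbrs A' x)
  rw [← card_outNbrs, ← card_outNbrs, ← card_outNbrs, ← card_inNbrs]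
  omega

end IsTournament

end Neighbourhoods

end DescPaper

theorem stmt7 {V : Type*} [Fintype V] [DecidableEq V]
    (T A' : Finset (V × V)) (k : ℕ)
    (hT : IsTournament T) (hDESC : IsDESC T A') (hk : A'.card ≤ k)
    (x y : V) (hxy : (x, y) ∈ T)
    (hdeg : (k : ℤ) < (outDeg T y : ℤ) - outDeg T x) :
    (x, y) ∈ A' := by
  by_contra hxyA
  obtain ⟨hA, hEulerian⟩ := hDESC
  obtain ⟨X, hX, hyX⟩ := exists_isStrongComponent_mem (T \ A') y
  have hcut (z : V) (hyz : (y, z) ∈ T) (hzx : (z, x) ∈ T) (hout : x ∉ X ∨ z ∉ X) :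
      (y, z) ∈ A' ∨ (z, x) ∈ A' := by
    by_contra! hkeep
    have hsub := hX.subset_of_stronglyConnectedOn (stronglyConnectedOn_triangle
      (Finset.mem_sdiff.2 ⟨hxy, hxyA⟩) (Finset.mem_sdiff.2 ⟨hyz, hkeep.1⟩)
      (Finset.mem_sdiff.2 ⟨hzx, hkeep.2⟩)) hyX (by simp)
    exact hout.elim (· (hsub (by simp))) (· (hsub (by simp)))
  have hbound : outDeg T y ≤ outDeg T x + outDeg A' y + inDeg A' x := by
    by_cases hxX : x ∈ X
    · exact hT.outDeg_le_of_isBalanced hA hxy (hEulerian X hX).2 hxX hyX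
        fun z hz hyz hzx => hcut z hyz hzx (.inr hz)
    · simpa [card_outNbrs, card_inNbrs] using hT.card_outNbrs_inter_le hxy Finset.univ
        fun z _ hyz hzx => hcut z hyz hzx (.inl hxX)
  have hA' := outDeg_add_inDeg_le_card fun hyx => hT.notMem_swap hxy (hA hyx)
  omega
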